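/- arXiv:1311.3274 — 2 statements merged into one kernel-verified Lean document; each statement's English description precedes it below -/
import Mathlib

section
/- Let A be a C*-algebra and α : A → A an isometric *-endomorphism with the Rokhlin property (for every p ∈ ℕ, every finite F ⊆ α^p(A), every ε > 0, there exist mutually orthogonal positive contractions e_{0,0},…,e_{0,p−1},e_{1,0},…,e_{1,p} satisfying the four Rokhlin conditions). Then the induced automorphism α_α of the stationary inductive limit A_α has the Rokhlin property for automorphisms: for every p, every finite F ⊆ A_α, every ε > 0 there are mutually orthogonal positive contractions in A_α satisfying the analogous four conditions with respect to α_α. -/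
/-!
Every element of the inductive limit is close to some `γ m (α^[p] b)`: first approximate it
by an element of some `γ n (A)`, then pass to a common later stage using
`γ (n + k) ∘ α^[k] = γ n`. Rokhlin towers of `α` relative to these finitely many elements of
`α^p(A)` are pushed into the limit by the contractive map `γ m`, which intertwines `α` with `β`;
since all the towers are contractions, the Rokhlin estimates survive the small perturbation of
the finite set.
-/

open Finset

/-- Approximate Rokhlin towers of height `p` (two towers, of heights `p` and `p+1`)
for a map `α : A → A`, relative to a finite set `F` and tolerance `ε`. -/
def RokhlinTowers {A : Type*} [NonUnitalCStarAlgebra A] [PartialOrder A]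
    [StarOrderedRing A] (α : A → A) (p : ℕ) (F : Finset A) (ε : ℝ) : Prop :=
  ∃ e₀ e₁ : ℕ → A,
    (∀ j < p, 0 ≤ e₀ j ∧ ‖e₀ j‖ ≤ 1) ∧
    (∀ j < p + 1, 0 ≤ e₁ j ∧ ‖e₁ j‖ ≤ 1) ∧
    (∀ i < p, ∀ j < p, i ≠ j → e₀ i * e₀ j = 0) ∧
    (∀ i < p + 1, ∀ j < p + 1, i ≠ j → e₁ i * e₁ j = 0) ∧
    (∀ i < p, ∀ j < p + 1, e₀ i * e₁ j = 0 ∧ e₁ j * e₀ i = 0) ∧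
    (∀ a ∈ F, ‖((∑ j ∈ range p, e₀ j) + ∑ j ∈ range (p + 1), e₁ j) * a - a‖ < ε) ∧
    (∀ a ∈ F, ∀ j < p, ‖e₀ j * a - a * e₀ j‖ < ε) ∧
    (∀ a ∈ F, ∀ j < p + 1, ‖e₁ j * a - a * e₁ j‖ < ε) ∧
    (∀ a ∈ F, ∀ j, j + 1 < p → ‖α (e₀ j) * a - e₀ (j + 1) * a‖ < ε) ∧
    (∀ a ∈ F, ∀ j, j + 1 < p + 1 → ‖α (e₁ j) * a - e₁ (j + 1) * a‖ < ε) ∧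
    (∀ a ∈ F, ‖α (e₀ (p - 1) + e₁ p) * a - (e₀ 0 + e₁ 0) * a‖ < ε)

/-- The Rokhlin property for an endomorphism `α : A → A` (Definition 2.1 of the paper):
Rokhlin towers exist relative to finite subsets of `α^p(A)`. -/
def RokhlinEndo {A : Type*} [NonUnitalCStarAlgebra A] [PartialOrder A]
    [StarOrderedRing A] (α : A → A) : Prop :=
  ∀ p : ℕ, 0 < p → ∀ F : Finset A, (∀ a ∈ F, a ∈ Set.range (α^[p])) →
    ∀ ε : ℝ, 0 < ε → RokhlinTowers α p F ε

/-- The Rokhlin property for an automorphism (Definition 1.1 of the paper):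
Rokhlin towers exist relative to arbitrary finite subsets. -/
def RokhlinAuto {A : Type*} [NonUnitalCStarAlgebra A] [PartialOrder A]
    [StarOrderedRing A] (α : A → A) : Prop :=
  ∀ p : ℕ, 0 < p → ∀ F : Finset A, ∀ ε : ℝ, 0 < ε → RokhlinTowers α p F ε

section Perturbation

variable {R : Type*} [NonUnitalSeminormedRing R]

theorem norm_mul_sub_mul_le_of_sub (x y a b : R) :
    ‖x * a - y * a‖ ≤ ‖x * b - y * b‖ + (‖x‖ + ‖y‖) * ‖a - b‖ :=
  calc ‖x * a - y * a‖ = ‖(x * b - y * b) + (x * (a - b) - y * (a - b))‖ := by noncomm_ring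
    _ ≤ ‖x * b - y * b‖ + (‖x * (a - b)‖ + ‖y * (a - b)‖) :=
      (norm_add_le _ _).trans (by gcongr; exact norm_sub_le _ _)
    _ ≤ ‖x * b - y * b‖ + (‖x‖ + ‖y‖) * ‖a - b‖ := by
      rw [add_mul]; gcongr <;> exact norm_mul_le _ _

theorem norm_mul_sub_mul_comm_le_of_sub (x a b : R) :
    ‖x * a - a * x‖ ≤ ‖x * b - b * x‖ + 2 * ‖x‖ * ‖a - b‖ :=
  calc ‖x * a - a * x‖ = ‖(x * b - b * x) + (x * (a - b) - (a - b) * x)‖ := by noncomm_ring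
    _ ≤ ‖x * b - b * x‖ + (‖x * (a - b)‖ + ‖(a - b) * x‖) :=
      (norm_add_le _ _).trans (by gcongr; exact norm_sub_le _ _)
    _ ≤ ‖x * b - b * x‖ + (‖x‖ * ‖a - b‖ + ‖a - b‖ * ‖x‖) := by
      gcongr <;> exact norm_mul_le _ _
    _ = ‖x * b - b * x‖ + 2 * ‖x‖ * ‖a - b‖ := by ring

theorem norm_mul_sub_self_le_of_sub (x a b : R) :
    ‖x * a - a‖ ≤ ‖x * b - b‖ + (‖x‖ + 1) * ‖a - b‖ :=
  calc ‖x * a - a‖ = ‖(x * b - b) + (x * (a - b) - (a - b))‖ := by noncomm_ring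
    _ ≤ ‖x * b - b‖ + (‖x * (a - b)‖ + ‖a - b‖) :=
      (norm_add_le _ _).trans (by gcongr; exact norm_sub_le _ _)
    _ ≤ ‖x * b - b‖ + (‖x‖ + 1) * ‖a - b‖ := by
      rw [add_one_mul]; gcongr; exact norm_mul_le _ _

end Perturbation

theorem norm_sum_range_le_of_norm_le_one {E : Type*} [SeminormedAddCommGroup E] {n : ℕ}
    {f : ℕ → E} (hf : ∀ j < n, ‖f j‖ ≤ 1) : ‖∑ j ∈ range n, f j‖ ≤ n := by
  simpa using norm_sum_le_of_le (range n) fun j hj => hf j (mem_range.1 hj)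

section InductiveLimit

variable {A L : Type*} {α : A → A} {γ : ℕ → A → L}

theorem apply_add_iterate_of_apply_succ (hcompat : ∀ n b, γ (n + 1) (α b) = γ n b)
    (n k : ℕ) (b : A) : γ (n + k) (α^[k] b) = γ n b := by
  induction k generalizing n b with
  | zero => rfl
  | succ k ih =>
    rw [Function.iterate_succ_apply, show n + (k + 1) = n + 1 + k by omega, ih, hcompat]

theorem exists_finset_range_iterate_dist_lt [PseudoMetricSpace L]
    (hcompat : ∀ n b, γ (n + 1) (α b) = γ n b) (hdense : Dense (⋃ n, Set.range (γ n)))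
    (p : ℕ) (F : Finset L) {δ : ℝ} (hδ : 0 < δ) :
    ∃ m, ∃ G : Finset A, (∀ b ∈ G, b ∈ Set.range α^[p]) ∧
      ∀ a ∈ F, ∃ b ∈ G, dist a (γ m b) < δ := by
  classical
  have happrox : ∀ a : L, ∃ n b, dist a (γ n b) < δ := fun a => by
    obtain ⟨_, hy, hab⟩ := hdense.exists_dist_lt a hδ
    obtain ⟨n, b, rfl⟩ := Set.mem_iUnion.1 hy
    exact ⟨n, b, hab⟩
  choose n b hb using happrox
  set N := F.sup n
  refine ⟨N + p, F.image fun a => α^[p + (N - n a)] (b a), ?_, ?_⟩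
  · exact forall_mem_image.2 fun a _ => ⟨_, (Function.iterate_add_apply _ _ _ _).symm⟩
  · intro a ha
    refine ⟨_, mem_image_of_mem _ ha, ?_⟩
    have hstage : N + p = n a + (p + (N - n a)) := by have := le_sup (f := n) ha; omega
    rw [hstage, apply_add_iterate_of_apply_succ hcompat]
    exact hb a

end InductiveLimit

namespace RokhlinTowers

variable {A L : Type*} [NonUnitalCStarAlgebra A] [PartialOrder A] [StarOrderedRing A]
  [NonUnitalCStarAlgebra L] [PartialOrder L] [StarOrderedRing L]

theorem map [DecidableEq L] (φ : A →⋆ₙₐ[ℂ] L) {α : A → A} {β : L → L}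
    (hφ : ∀ x, β (φ x) = φ (α x)) {p : ℕ} {F : Finset A} {ε : ℝ} (h : RokhlinTowers α p F ε) :
    RokhlinTowers β p (F.image φ) ε := by
  obtain ⟨e₀, e₁, he₀, he₁, ho₀, ho₁, ho₀₁, hsum, hc₀, hc₁, hs₀, hs₁, hcyc⟩ := h
  have hlt {x : A} (hx : ‖x‖ < ε) : ‖φ x‖ < ε :=
    (NonUnitalStarAlgHom.norm_apply_le φ x).trans_lt hx
  have hle {x : A} (hx : ‖x‖ ≤ 1) : ‖φ x‖ ≤ 1 :=
    (NonUnitalStarAlgHom.norm_apply_le φ x).trans hx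
  refine ⟨fun j => φ (e₀ j), fun j => φ (e₁ j), fun j hj => ?_, fun j hj => ?_,
    fun i hi j hj hij => ?_, fun i hi j hj hij => ?_, fun i hi j hj => ?_,
    forall_mem_image.2 fun c hc => ?_, forall_mem_image.2 fun c hc j hj => ?_,
    forall_mem_image.2 fun c hc j hj => ?_, forall_mem_image.2 fun c hc j hj => ?_,
    forall_mem_image.2 fun c hc j hj => ?_, forall_mem_image.2 fun c hc => ?_⟩
  · exact ⟨map_nonneg φ (he₀ j hj).1, hle (he₀ j hj).2⟩
  · exact ⟨map_nonneg φ (he₁ j hj).1, hle (he₁ j hj).2⟩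
  · rw [← map_mul, ho₀ i hi j hj hij, map_zero]
  · rw [← map_mul, ho₁ i hi j hj hij, map_zero]
  · simp only [← map_mul, (ho₀₁ i hi j hj).1, (ho₀₁ i hi j hj).2, map_zero, and_self]
  · simpa [map_sum] using hlt (hsum c hc)
  · simpa using hlt (hc₀ c hc j hj)
  · simpa using hlt (hc₁ c hc j hj)
  · simpa [hφ] using hlt (hs₀ c hc j hj)
  · simpa [hφ] using hlt (hs₁ c hc j hj)
  · simpa [← map_add, hφ] using hlt (hcyc c hc)

theorem of_approx {β : L → L} (hβ : ∀ x, ‖β x‖ ≤ ‖x‖) {p : ℕ} (hp : 0 < p) {F G : Finset L}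
    {ε' δ ε : ℝ} (h : RokhlinTowers β p G ε') (hFG : ∀ a ∈ F, ∃ b ∈ G, dist a b ≤ δ)
    (hε : ε' + (2 * p + 4) * δ ≤ ε) : RokhlinTowers β p F ε := by
  obtain ⟨e₀, e₁, he₀, he₁, ho₀, ho₁, ho₀₁, hsum, hc₀, hc₁, hs₀, hs₁, hcyc⟩ := h
  have hsum_norm : ‖(∑ j ∈ range p, e₀ j) + ∑ j ∈ range (p + 1), e₁ j‖ ≤ 2 * p + 1 := by
    have h₀ := norm_sum_range_le_of_norm_le_one fun j hj => (he₀ j hj).2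
    have h₁ := norm_sum_range_le_of_norm_le_one fun j hj => (he₁ j hj).2
    push_cast at h₁
    linarith [norm_add_le (∑ j ∈ range p, e₀ j) (∑ j ∈ range (p + 1), e₁ j)]
  have hpair {x y : L} (hx : ‖x‖ ≤ 1) (hy : ‖y‖ ≤ 1) : ‖x + y‖ ≤ 2 :=
    (norm_add_le x y).trans (by linarith)
  have hβpair {x y : L} (hx : ‖x‖ ≤ 1) (hy : ‖y‖ ≤ 1) : ‖β (x + y)‖ ≤ 2 :=
    (hβ _).trans (hpair hx hy)
  -- `2 * p + 4` dominates every constant below: `‖∑ e‖ + 1`, `2 * ‖e j‖` and `‖β x‖ + ‖y‖`.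
  suffices perturb : ∀ a ∈ F, ∃ b ∈ G, ∀ {t K : ℝ}, t < ε' → 0 ≤ K → K ≤ 2 * p + 4 →
      ∀ {u : L}, ‖u‖ ≤ t + K * ‖a - b‖ → ‖u‖ < ε by
    refine ⟨e₀, e₁, he₀, he₁, ho₀, ho₁, ho₀₁, fun a ha => ?_, fun a ha j hj => ?_,
      fun a ha j hj => ?_, fun a ha j hj => ?_, fun a ha j hj => ?_, fun a ha => ?_⟩ <;>
    obtain ⟨b, hb, hab⟩ := perturb a ha
    · exact hab (hsum b hb) (by positivity) (by linarith)
        (norm_mul_sub_self_le_of_sub _ a b)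
    · exact hab (hc₀ b hb j hj) (by positivity) (by linarith [(he₀ j hj).2, norm_nonneg (e₀ j)])
        (norm_mul_sub_mul_comm_le_of_sub _ a b)
    · exact hab (hc₁ b hb j hj) (by positivity) (by linarith [(he₁ j hj).2, norm_nonneg (e₁ j)])
        (norm_mul_sub_mul_comm_le_of_sub _ a b)
    · exact hab (hs₀ b hb j hj) (by positivity)
        (by linarith [hβ (e₀ j), (he₀ j (by omega)).2, (he₀ (j + 1) hj).2])
        (norm_mul_sub_mul_le_of_sub _ _ a b)
    · exact hab (hs₁ b hb j hj) (by positivity)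
        (by linarith [hβ (e₁ j), (he₁ j (by omega)).2, (he₁ (j + 1) hj).2])
        (norm_mul_sub_mul_le_of_sub _ _ a b)
    · exact hab (hcyc b hb) (by positivity)
        (by linarith [hβpair (he₀ (p - 1) (by omega)).2 (he₁ p (by omega)).2,
          hpair (he₀ 0 (by omega)).2 (he₁ 0 (by omega)).2])
        (norm_mul_sub_mul_le_of_sub _ _ a b)
  intro a ha
  obtain ⟨b, hb, hab⟩ := hFG a ha
  rw [dist_eq_norm] at hab
  refine ⟨b, hb, fun {t K} ht hK hK' {u} hu => hu.trans_lt ?_⟩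
  calc _ < ε' + K * ‖a - b‖ := by linarith
    _ ≤ ε' + (2 * p + 4) * δ := by gcongr
    _ ≤ ε := hε

end RokhlinTowers

theorem induced_automorphism_has_rokhlin_property_general
    {A L : Type*} [NonUnitalCStarAlgebra A] [PartialOrder A] [StarOrderedRing A]
    [NonUnitalCStarAlgebra L] [PartialOrder L] [StarOrderedRing L]
    (α : A →⋆ₙₐ[ℂ] A)
    (hRok : RokhlinEndo (⇑α))
    (γ : ℕ → (A →⋆ₙₐ[ℂ] L))
    (hcompat : ∀ n : ℕ, (γ (n + 1)).comp α = γ n)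
    (hdense : closure (⋃ n : ℕ, Set.range (γ n)) = Set.univ)
    (β : L ≃⋆ₐ[ℂ] L) (hβ : ∀ (n : ℕ) (a : A), β (γ n a) = γ n (α a)) :
    RokhlinAuto (⇑β) := by
  classical
  intro p hp F ε hε
  set δ := ε / (4 * p + 8)
  obtain ⟨m, G, hGp, hFG⟩ := exists_finset_range_iterate_dist_lt
    (fun n b => DFunLike.congr_fun (hcompat n) b) (dense_iff_closure_eq.2 hdense) p F
    (show 0 < δ by positivity)
  have hG := (hRok p hp G hGp (ε / 2) (half_pos hε)).map (γ m) (hβ m)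
  refine hG.of_approx (fun x => (StarAlgEquiv.norm_map β x).le) hp (δ := δ) ?_ ?_
  · intro a ha
    obtain ⟨b, hb, hab⟩ := hFG a ha
    exact ⟨γ m b, mem_image_of_mem _ hb, hab.le⟩
  · have : (2 * p + 4 : ℝ) * δ = ε / 2 := by simp only [δ]; field_simp; ring
    linarith

/-- If `α : A → A` is an injective (hence isometric) *-endomorphism with
the Rokhlin property, and `L` with canonical isometric maps `γ_n` is the stationary
inductive limit `A →α A →α ⋯` with induced automorphism `β` (`β ∘ γ_n = γ_n ∘ α`),
then `β` has the Rokhlin property for automorphisms. -/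
theorem induced_automorphism_has_rokhlin_property
    {A L : Type*} [NonUnitalCStarAlgebra A] [PartialOrder A] [StarOrderedRing A]
    [NonUnitalCStarAlgebra L] [PartialOrder L] [StarOrderedRing L]
    (α : A →⋆ₙₐ[ℂ] A) (hinj : Function.Injective α)
    (hRok : RokhlinEndo (⇑α))
    (γ : ℕ → (A →⋆ₙₐ[ℂ] L))
    (hiso : ∀ n, Isometry (γ n))
    (hcompat : ∀ n : ℕ, (γ (n + 1)).comp α = γ n)
    (hdense : closure (⋃ n : ℕ, Set.range (γ n)) = Set.univ)
    (β : L ≃⋆ₐ[ℂ] L) (hβ : ∀ (n : ℕ) (a : A), β (γ n a) = γ n (α a)) :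
    RokhlinAuto (⇑β) :=
  induced_automorphism_has_rokhlin_property_general α hRok γ hcompat hdense β hβ
end

section
/- Let A be a C*-algebra, B ⊆ A a C*-subalgebra, let e_1,…,e_n ∈ A be mutually orthogonal positive contractions commuting with B such that (Σ e_j)a = a for a ∈ B, and let φ_1,…,φ_n : D → A be linear maps from a C*-algebra D such that for each j, k and all x,y ∈ D, a ∈ B: (φ_j(xy) − φ_j(x)φ_j(y))a = 0, [φ_j(x), e_k] = 0 and [φ_j(x), a] = 0. Define θ(x) = Σ_j e_j φ_j(x). Then (θ(xy) − θ(x)θ(y))a = 0 for all x, y ∈ D and a ∈ B. -/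
open Finset

/-- Let `e_1,…,e_n` be mutually orthogonal positive contractions in `A`,
commuting with a C*-subalgebra `B`, with `(Σ e_j) a = a` for `a ∈ B`, and let
`φ_1,…,φ_n : D → A` be linear maps which are multiplicative relative to `B`, whose
images commute with the `e_k` and with `B`.  Then `θ(x) = Σ_j e_j φ_j(x)` satisfies
`(θ(xy) − θ(x)θ(y)) a = 0` for all `x, y ∈ D`, `a ∈ B`. -/
theorem tower_sum_multiplicative_relative_to_subalgebra
    {A D : Type*} [NonUnitalCStarAlgebra A] [PartialOrder A] [StarOrderedRing A]
    [NonUnitalCStarAlgebra D]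
    (B : NonUnitalStarSubalgebra ℂ A) (hBclosed : IsClosed (B : Set A))
    (n : ℕ) (e : Fin n → A)
    (hpos : ∀ j, 0 ≤ e j) (hcontr : ∀ j, ‖e j‖ ≤ 1)
    (horth : ∀ j k, j ≠ k → e j * e k = 0)
    (hcomm : ∀ j, ∀ a ∈ B, Commute (e j) a)
    (hsum : ∀ a ∈ B, (∑ j, e j) * a = a)
    (φ : Fin n → (D →ₗ[ℂ] A))
    (hφmul : ∀ j, ∀ x y : D, ∀ a ∈ B, (φ j (x * y) - φ j x * φ j y) * a = 0)
    (hφe : ∀ j k, ∀ x : D, Commute (φ j x) (e k))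
    (hφB : ∀ j, ∀ x : D, ∀ a ∈ B, Commute (φ j x) a) :
    ∀ (x y : D), ∀ a ∈ B,
      ((∑ j, e j * φ j (x * y)) - (∑ j, e j * φ j x) * (∑ j, e j * φ j y)) * a = 0 := by
  intro x y a ha
  have key : ∀ j, e j * e j * a = e j * a := by
    intro j
    have h1 : e j * (∑ k, e k) = e j * e j := by
      rw [Finset.mul_sum]
      exact Finset.sum_eq_single j (fun k _ hk => horth j k (Ne.symm hk))
        (fun h => absurd (Finset.mem_univ j) h)
    calc e j * e j * a = e j * (∑ k, e k) * a := by rw [h1]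
      _ = e j * ((∑ k, e k) * a) := mul_assoc _ _ _
      _ = e j * a := by rw [hsum a ha]
  rw [sub_mul, sub_eq_zero]
  have rhs : (∑ j, e j * φ j x) * (∑ j, e j * φ j y) * a
      = ∑ j, ∑ k, e j * φ j x * (e k * φ k y) * a := by
    simp only [Finset.sum_mul, Finset.mul_sum]
    exact Finset.sum_comm
  rw [rhs, Finset.sum_mul]
  refine Finset.sum_congr rfl fun j _ => ?_
  have diag : e j * φ j x * (e j * φ j y) * a = e j * φ j (x * y) * a := by
    have c1 : Commute (e j) (φ j x) := (hφe j j x).symm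
    have c2 : Commute (e j) (φ j y) := (hφe j j y).symm
    have c3 : Commute (e j * e j) (φ j x * φ j y) :=
      (c1.mul_left c1).mul_right (c2.mul_left c2)
    have c4 : Commute (e j) (φ j x * φ j y) := c1.mul_right c2
    have hm := hφmul j x y a ha
    rw [sub_mul, sub_eq_zero] at hm
    calc e j * φ j x * (e j * φ j y) * a
        = e j * (φ j x * e j) * (φ j y * a) := by noncomm_ring
      _ = e j * (e j * φ j x) * (φ j y * a) := by rw [(hφe j j x).eq]
      _ = e j * e j * (φ j x * φ j y * a) := by noncomm_ring
      _ = φ j x * φ j y * (e j * e j * a) := by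
          rw [← mul_assoc, c3.eq, mul_assoc, mul_assoc]
      _ = φ j x * φ j y * (e j * a) := by rw [key j]
      _ = e j * (φ j x * φ j y * a) := by rw [← mul_assoc, ← c4.eq, mul_assoc]
      _ = e j * (φ j (x * y) * a) := by rw [hm]
      _ = e j * φ j (x * y) * a := (mul_assoc _ _ _).symm
  have off : ∀ k, k ≠ j → e j * φ j x * (e k * φ k y) * a = 0 := by
    intro k hk
    calc e j * φ j x * (e k * φ k y) * a
        = e j * (φ j x * e k) * (φ k y * a) := by noncomm_ring
      _ = e j * (e k * φ j x) * (φ k y * a) := by rw [(hφe j k x).eq]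
      _ = e j * e k * (φ j x * (φ k y * a)) := by noncomm_ring
      _ = 0 := by rw [horth j k (Ne.symm hk), zero_mul]
  exact ((Finset.sum_eq_single j (fun k _ hk => off k hk)
    (fun h => absurd (Finset.mem_univ j) h)).trans diag).symm
end
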